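/- arXiv:2503.20092 — 5 statements merged into one kernel-verified Lean document; each statement's English description precedes it below -/
import Mathlib

section
/- Let F : [v̲, v̄] → [0,1] be an absolutely continuous cdf with density f, let n ≥ 2, m ≥ 1, and q = 1 - F(v*) for some v* ∈ [v̲, v̄]. Define F̃(v) = (F(v) - F(v*))/q and f̃(v) = f(v)/q for v ≥ v*. Then for v ∈ [v*, v̄]: Σ_{k1=0}^{m-1} Σ_{k2=1}^{nm-m} C(m-1,k1) C(nm-m,k2) q^{k1+k2} (1-q)^{nm-1-k1-k2} k2 F̃(v)^{k1+k2-1} f̃(v) = m(n-1) F(v)^{nm-2} f(v). -/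
theorem stmt3 (n m : ℕ) (hn : 2 ≤ n) (hm : 1 ≤ m)
    (F f Ft ft : ℝ → ℝ) (vstar v : ℝ) (q : ℝ)
    (hq : q = 1 - F vstar) (hq0 : 0 < q)
    (hFt : ∀ u, Ft u = (F u - F vstar) / q)
    (hft : ∀ u, ft u = f u / q) :
    ∑ k1 ∈ Finset.range m, ∑ k2 ∈ Finset.Icc 1 (n * m - m),
        ((m - 1).choose k1 : ℝ) * ((n * m - m).choose k2 : ℝ) *
          q ^ (k1 + k2) * (1 - q) ^ (n * m - 1 - k1 - k2) *
          (k2 : ℝ) * Ft v ^ (k1 + k2 - 1) * ft v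
      = (m : ℝ) * ((n : ℝ) - 1) * F v ^ (n * m - 2) * f v := by
  have hb1 : 1 ≤ n * m - m := by
    have : 2 * m ≤ n * m := Nat.mul_le_mul_right m hn
    omega
  set b := n * m - m with hbdef
  set x := q * Ft v with hxdef
  set y := (1 : ℝ) - q with hydef
  have hq' : q ≠ 0 := ne_of_gt hq0
  have hxy : x + y = F v := by
    have h1 : q * ((F v - F vstar) / q) = F v - F vstar := by field_simp
    rw [hxdef, hydef, hFt v, h1]
    linarith
  -- rewrite each summand as a product of k1-part and k2-part
  have key : ∀ k1 ∈ Finset.range m, ∀ k2 ∈ Finset.Icc 1 b,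
      ((m - 1).choose k1 : ℝ) * (b.choose k2 : ℝ) *
          q ^ (k1 + k2) * y ^ (n * m - 1 - k1 - k2) *
          (k2 : ℝ) * Ft v ^ (k1 + k2 - 1) * ft v
      = (((m - 1).choose k1 : ℝ) * x ^ k1 * y ^ (m - 1 - k1)) *
        (((b.choose k2 : ℝ) * (k2 : ℝ) * x ^ (k2 - 1) * y ^ (b - k2)) * f v) := by
    intro k1 hk1 k2 hk2
    simp only [Finset.mem_range] at hk1
    simp only [Finset.mem_Icc] at hk2
    have h1 : n * m - 1 - k1 - k2 = (m - 1 - k1) + (b - k2) := by omega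
    have h2 : k1 + k2 - 1 = k1 + (k2 - 1) := by omega
    have h3 : k1 + k2 = (k1 + (k2 - 1)) + 1 := by omega
    rw [h1, h2, h3, hft, pow_add, pow_add, pow_add, pow_add, hxdef, mul_pow, mul_pow]
    have hqq : q * q⁻¹ = 1 := mul_inv_cancel₀ hq'
    rw [div_eq_mul_inv]
    linear_combination ((m - 1).choose k1 : ℝ) * (b.choose k2 : ℝ) * q ^ k1 * q ^ (k2 - 1) *
      Ft v ^ k1 * Ft v ^ (k2 - 1) * y ^ (m - 1 - k1) * y ^ (b - k2) * (k2 : ℝ) * f v * hqq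
  rw [Finset.sum_congr rfl (fun k1 hk1 => Finset.sum_congr rfl (key k1 hk1))]
  -- factor the double sum
  have factored : ∑ k1 ∈ Finset.range m, ∑ k2 ∈ Finset.Icc 1 b,
      (((m - 1).choose k1 : ℝ) * x ^ k1 * y ^ (m - 1 - k1)) *
        (((b.choose k2 : ℝ) * (k2 : ℝ) * x ^ (k2 - 1) * y ^ (b - k2)) * f v)
      = (∑ k1 ∈ Finset.range m, ((m - 1).choose k1 : ℝ) * x ^ k1 * y ^ (m - 1 - k1)) *
        ((∑ k2 ∈ Finset.Icc 1 b, (b.choose k2 : ℝ) * (k2 : ℝ) * x ^ (k2 - 1) * y ^ (b - k2)) * f v) := by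
    rw [Finset.sum_mul]
    exact Finset.sum_congr rfl fun k1 _ => by rw [← Finset.mul_sum, ← Finset.sum_mul]
  rw [factored]
  -- first sum: binomial theorem
  have sum1 : ∑ k1 ∈ Finset.range m, ((m - 1).choose k1 : ℝ) * x ^ k1 * y ^ (m - 1 - k1)
      = (x + y) ^ (m - 1) := by
    have hm' : m = (m - 1) + 1 := by omega
    rw [add_pow, hm']
    exact Finset.sum_congr rfl fun k _ => by ring
  -- second sum: derivative of binomial theorem
  have sum2 : ∑ k2 ∈ Finset.Icc 1 b, (b.choose k2 : ℝ) * (k2 : ℝ) * x ^ (k2 - 1) * y ^ (b - k2)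
      = (b : ℝ) * (x + y) ^ (b - 1) := by
    rw [show Finset.Icc 1 b = Finset.Ico 1 (b + 1) from by rw [Finset.Ico_add_one_right_eq_Icc],
      Finset.sum_Ico_eq_sum_range]
    have hb' : b + 1 - 1 = b := by omega
    rw [hb']
    have step : ∀ j ∈ Finset.range b,
        (b.choose (1 + j) : ℝ) * ((1 + j : ℕ) : ℝ) * x ^ (1 + j - 1) * y ^ (b - (1 + j))
        = (b : ℝ) * (((b - 1).choose j : ℝ) * x ^ j * y ^ (b - 1 - j)) := by
      intro j hj
      simp only [Finset.mem_range] at hj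
      have hnat : b * (b - 1).choose j = b.choose (1 + j) * (1 + j) := by
        rw [Nat.add_comm 1 j]
        have h := Nat.add_one_mul_choose_eq (b - 1) j
        rwa [Nat.sub_add_cancel hb1] at h
      have hcast : (b : ℝ) * ((b - 1).choose j : ℝ) = (b.choose (1 + j) : ℝ) * ((1 + j : ℕ) : ℝ) := by
        exact_mod_cast congrArg (Nat.cast : ℕ → ℝ) hnat
      have he1 : 1 + j - 1 = j := by omega
      have he2 : b - (1 + j) = b - 1 - j := by omega
      rw [he1, he2, ← hcast]
      ring
    rw [Finset.sum_congr rfl step, ← Finset.mul_sum]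
    congr 1
    have hbb : b = (b - 1) + 1 := by omega
    rw [add_pow]
    rw [show Finset.range b = Finset.range ((b - 1) + 1) by rw [← hbb]]
    exact Finset.sum_congr rfl fun k _ => by ring
  rw [sum1, sum2, hxy]
  have hmnm : m ≤ n * m := Nat.le_mul_of_pos_left m (by omega)
  have hbcast : (b : ℝ) = (m : ℝ) * ((n : ℝ) - 1) := by
    rw [hbdef, Nat.cast_sub hmnm]
    push_cast
    ring
  have hexp : (m - 1) + (b - 1) = n * m - 2 := by omega
  rw [hbcast, ← hexp, pow_add]
  ring
end

section
/- Let n ≥ 2, m ≥ 1, and q ∈ [0,1]. Then Σ_{k1=0}^{m-1} Σ_{k2=1}^{nm-m} C(m-1,k1) C(nm-m,k2) q^{k1+k2} (1-q)^{nm-1-k1-k2} · k1/(k1+k2) = (m-1)/(nm-1) + (m(n-1)/(nm-1))·(1-q)^{nm-1} - (1-q)^{nm-m}. -/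
open Finset

lemma vandW (a b s : ℕ) :
    ∑ i ∈ Finset.range (s+2), i * (a+1).choose i * b.choose (s+1-i)
      = (a+1) * (a+b).choose s := by
  rw [Finset.sum_range_succ']
  simp only [Nat.zero_mul, zero_mul, add_zero]
  have h1 : ∀ j, (j+1) * (a+1).choose (j+1) = (a+1) * a.choose j := by
    intro j
    rw [mul_comm, ← Nat.add_one_mul_choose_eq]
  calc ∑ j ∈ range (s+1), (j+1) * (a+1).choose (j+1) * b.choose (s+1-(j+1))
      = ∑ j ∈ range (s+1), (a+1) * (a.choose j * b.choose (s-j)) := by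
        refine Finset.sum_congr rfl fun j hj => ?_
        rw [h1 j]
        have : s + 1 - (j+1) = s - j := by omega
        rw [this, mul_assoc]
    _ = (a+1) * ∑ j ∈ range (s+1), a.choose j * b.choose (s-j) := by
        rw [Finset.mul_sum]
    _ = (a+1) * (a+b).choose s := by
        rw [Nat.add_choose_eq, Finset.Nat.sum_antidiagonal_eq_sum_range_succ
          (fun i j => a.choose i * b.choose j)]

lemma key (a b : ℕ) (q : ℝ) :
    ∑ k1 ∈ Finset.range (a+2), ∑ k2 ∈ Finset.Icc 1 b,
        (((a+1).choose k1 : ℝ) * (b.choose k2 : ℝ) * q ^ (k1+k2)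
          * (1-q) ^ (a+1+b-k1-k2) * ((k1:ℝ)/((k1:ℝ)+(k2:ℝ))))
      = ((a:ℝ)+1)/((a:ℝ)+1+(b:ℝ))
        + ((b:ℝ)/((a:ℝ)+1+(b:ℝ))) * (1-q) ^ (a+1+b) - (1-q) ^ b := by
  set P : ℝ := 1 - q with hP
  set N : ℕ := a + 1 + b with hN
  set f : ℕ → ℕ → ℝ := fun k1 k2 =>
    ((a+1).choose k1 : ℝ) * (b.choose k2 : ℝ) * q ^ (k1+k2)
      * P ^ (N-k1-k2) * ((k1:ℝ)/((k1:ℝ)+(k2:ℝ))) with hf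
  -- split off k2 = 0 column
  have hins : Finset.range (b+1) = insert 0 (Finset.Icc 1 b) := by
    ext x; simp [Finset.mem_range, Finset.mem_Icc]; omega
  have hsplit : ∀ k1, ∑ k2 ∈ Finset.Icc 1 b, f k1 k2
      = (∑ k2 ∈ Finset.range (b+1), f k1 k2) - f k1 0 := by
    intro k1
    rw [hins, Finset.sum_insert (by simp)]
    ring
  have step1 : ∑ k1 ∈ Finset.range (a+2), ∑ k2 ∈ Finset.Icc 1 b, f k1 k2
      = (∑ k1 ∈ Finset.range (a+2), ∑ k2 ∈ Finset.range (b+1), f k1 k2)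
        - ∑ k1 ∈ Finset.range (a+2), f k1 0 := by
    rw [← Finset.sum_sub_distrib]
    exact Finset.sum_congr rfl fun k1 _ => hsplit k1
  -- column value
  have hbin : ∀ M : ℕ, ∑ k ∈ Finset.range (M+1), (M.choose k : ℝ) * q ^ k * P ^ (M-k) = 1 := by
    intro M
    have h := add_pow q P M
    rw [hP, add_sub_cancel, one_pow] at h
    calc ∑ k ∈ Finset.range (M+1), (M.choose k : ℝ) * q ^ k * P ^ (M-k)
        = ∑ k ∈ Finset.range (M+1), q ^ k * P ^ (M-k) * (M.choose k : ℝ) :=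
          Finset.sum_congr rfl fun k _ => by ring
      _ = 1 := by rw [hP]; exact h.symm
  have col : ∑ k1 ∈ Finset.range (a+2), f k1 0 = P ^ b - P ^ N := by
    rw [Finset.sum_range_succ']
    have h0 : f 0 0 = 0 := by simp [hf]
    rw [h0, add_zero]
    have hterm : ∀ j ∈ Finset.range (a+1), f (j+1) 0
        = ((a+1).choose (j+1) : ℝ) * q^(j+1) * P^(a+1-(j+1)) * P^b := by
      intro j hj
      simp only [hf, Nat.choose_zero_right, Nat.cast_one, Nat.cast_zero, add_zero,
        Nat.sub_zero]
      have he : N - (j+1) = (a+1-(j+1)) + b := by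
        have := Finset.mem_range.mp hj; omega
      rw [he, pow_add]
      have hne : ((j:ℝ)+1) ≠ 0 := by positivity
      push_cast
      field_simp
      ring
    rw [Finset.sum_congr rfl hterm, ← Finset.sum_mul]
    have hb2 := hbin (a+1)
    rw [Finset.sum_range_succ'] at hb2
    simp only [Nat.choose_zero_right, pow_zero, Nat.cast_one, one_mul, mul_one,
      Nat.sub_zero] at hb2
    have hsum : ∑ j ∈ Finset.range (a+1),
        ((a+1).choose (j+1):ℝ) * q^(j+1) * P^(a+1-(j+1)) = 1 - P^(a+1) := by
      linarith
    rw [hsum]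
    have hpN : P^N = P^(a+1) * P^b := by rw [hN, pow_add]
    rw [hpN]; ring
  -- rectangle value
  have rect : ∑ k1 ∈ Finset.range (a+2), ∑ k2 ∈ Finset.range (b+1), f k1 k2
      = (((a:ℝ)+1)/(N:ℝ)) * (1 - P ^ N) := by
    have hNne : (N:ℝ) ≠ 0 := by
      have : 0 < N := by omega
      positivity
    -- extend inner sums to range (N+1-k1)
    have r1 : ∀ k1 ∈ Finset.range (a+2), ∑ k2 ∈ Finset.range (b+1), f k1 k2
        = ∑ k2 ∈ Finset.range (N+1-k1), f k1 k2 := by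
      intro k1 hk1
      have hk1' := Finset.mem_range.mp hk1
      refine Finset.sum_subset (Finset.range_subset_range.mpr (by omega)) ?_
      intro k2 _ hk2
      have : b < k2 := by
        simp only [Finset.mem_range, not_lt] at hk2
        omega
      simp [hf, Nat.choose_eq_zero_of_lt this]
    have r2 : ∑ k1 ∈ Finset.range (a+2), ∑ k2 ∈ Finset.range (b+1), f k1 k2
        = ∑ k1 ∈ Finset.range (N+1), ∑ k2 ∈ Finset.range (N+1-k1), f k1 k2 := by
      rw [Finset.sum_congr rfl r1]
      refine Finset.sum_subset (Finset.range_subset_range.mpr (by omega)) ?_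
      intro k1 _ hk1
      have : a + 1 < k1 := by
        simp only [Finset.mem_range, not_lt] at hk1
        omega
      refine Finset.sum_eq_zero fun k2 _ => ?_
      simp [hf, Nat.choose_eq_zero_of_lt this]
    rw [r2, ← Finset.sum_range_diag_flip (N+1) f, Finset.sum_range_succ']
    have h00 : ∑ k ∈ Finset.range (0+1), f k (0-k) = 0 := by simp [hf]
    rw [h00, add_zero]
    -- evaluate each diagonal sum
    have r5 : ∀ t ∈ Finset.range N, ∑ k ∈ Finset.range (t+1+1), f k (t+1-k)
        = (((a:ℝ)+1)/(N:ℝ)) * ((N.choose (t+1) : ℝ) * (q^(t+1) * P^(N-(t+1)))) := by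
      intro t _
      have htne : ((t:ℝ)+1) ≠ 0 := by positivity
      have hterm : ∀ k ∈ Finset.range (t+2), f k (t+1-k)
          = ((k:ℝ) * (((a+1).choose k : ℕ):ℝ) * ((b.choose (t+1-k) : ℕ):ℝ))
            * (q^(t+1) * P^(N-(t+1)) / ((t:ℝ)+1)) := by
        intro k hk
        have hk' : k ≤ t+1 := by have := Finset.mem_range.mp hk; omega
        simp only [hf]
        have he1 : k + (t+1-k) = t+1 := by omega
        have he2 : N - k - (t+1-k) = N - (t+1) := by omega
        rw [he1, he2]
        have hc : ((t+1-k : ℕ) : ℝ) = (t:ℝ)+1-(k:ℝ) := by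
          push_cast [Nat.cast_sub (by omega : k ≤ t+1)]
          ring
        rw [hc]
        have : (k:ℝ) + ((t:ℝ)+1-(k:ℝ)) = (t:ℝ)+1 := by ring
        rw [this]
        ring
      rw [Finset.sum_congr rfl hterm, ← Finset.sum_mul]
      have hv : (∑ k ∈ Finset.range (t+2),
          (k:ℝ) * (((a+1).choose k : ℕ):ℝ) * ((b.choose (t+1-k) : ℕ):ℝ))
          = ((a:ℝ)+1) * (((a+b).choose t : ℕ):ℝ) := by
        have h := vandW a b t
        calc (∑ k ∈ Finset.range (t+2),
            (k:ℝ) * (((a+1).choose k : ℕ):ℝ) * ((b.choose (t+1-k) : ℕ):ℝ))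
            = ((∑ k ∈ Finset.range (t+2), k * (a+1).choose k * b.choose (t+1-k) : ℕ) : ℝ) := by
              push_cast; rfl
          _ = _ := by rw [h]; push_cast; ring
      rw [hv]
      have hcc : (N:ℝ) * (((a+b).choose t : ℕ):ℝ) = ((N.choose (t+1) : ℕ):ℝ) * ((t:ℝ)+1) := by
        have h2 : (a+b).succ * (a+b).choose t = ((a+b)+1).choose (t+1) * (t+1) :=
          Nat.add_one_mul_choose_eq (a+b) t
        have hNe : N = (a+b)+1 := by omega
        rw [hNe]
        exact_mod_cast h2
      have hcd : (((a+b).choose t : ℕ):ℝ) = ((N.choose (t+1) : ℕ):ℝ) * ((t:ℝ)+1) / (N:ℝ) := by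
        rw [eq_div_iff hNne]; linarith
      rw [hcd]
      field_simp
    rw [Finset.sum_congr rfl (fun t ht => r5 t ht), ← Finset.mul_sum]
    -- final binomial sum
    have hb3 := hbin N
    rw [Finset.sum_range_succ'] at hb3
    simp only [Nat.choose_zero_right, pow_zero, Nat.cast_one, one_mul, mul_one,
      Nat.sub_zero] at hb3
    have hsum2 : ∑ t ∈ Finset.range N, ((N.choose (t+1) : ℝ) * (q^(t+1) * P^(N-(t+1))))
        = 1 - P^N := by
      have : ∀ t ∈ Finset.range N, (N.choose (t+1) : ℝ) * (q^(t+1) * P^(N-(t+1)))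
          = (N.choose (t+1) : ℝ) * q^(t+1) * P^(N-(t+1)) := fun t _ => by ring
      rw [Finset.sum_congr rfl this]
      linarith
    rw [hsum2]
  rw [step1, col, rect]
  have hNc : (N:ℝ) = (a:ℝ)+1+(b:ℝ) := by rw [hN]; push_cast; ring
  have hNne : ((a:ℝ)+1+(b:ℝ)) ≠ 0 := by positivity
  rw [hNc]
  field_simp
  ring

theorem stmt4 (n m : ℕ) (hn : 2 ≤ n) (hm : 1 ≤ m) (q : ℝ) (hq : q ∈ Set.Icc (0:ℝ) 1) :
    ∑ k1 ∈ Finset.range m, ∑ k2 ∈ Finset.Icc 1 (n * m - m),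
        ((m - 1).choose k1 : ℝ) * ((n * m - m).choose k2 : ℝ) *
          q ^ (k1 + k2) * (1 - q) ^ (n * m - 1 - k1 - k2) *
          ((k1 : ℝ) / ((k1 : ℝ) + (k2 : ℝ)))
      = ((m : ℝ) - 1) / ((n : ℝ) * (m : ℝ) - 1) +
        ((m : ℝ) * ((n : ℝ) - 1) / ((n : ℝ) * (m : ℝ) - 1)) * (1 - q) ^ (n * m - 1) -
        (1 - q) ^ (n * m - m) := by
  have hnm : m ≤ n * m := Nat.le_mul_of_pos_left m (by omega)
  rcases eq_or_lt_of_le hm with hm1 | hm2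
  · -- m = 1
    subst hm1
    have hLHS : ∑ k1 ∈ Finset.range 1, ∑ k2 ∈ Finset.Icc 1 (n * 1 - 1),
        ((1 - 1).choose k1 : ℝ) * ((n * 1 - 1).choose k2 : ℝ) *
          q ^ (k1 + k2) * (1 - q) ^ (n * 1 - 1 - k1 - k2) *
          ((k1 : ℝ) / ((k1 : ℝ) + (k2 : ℝ))) = 0 := by
      rw [Finset.sum_range_one]
      refine Finset.sum_eq_zero fun k2 _ => by simp
    rw [hLHS]
    have hne : (n:ℝ) - 1 ≠ 0 := by
      have : (2:ℝ) ≤ (n:ℝ) := by exact_mod_cast hn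
      linarith
    rw [Nat.cast_one]
    field_simp
    ring
  · -- m ≥ 2
    obtain ⟨a, rfl⟩ : ∃ a, m = a + 2 := ⟨m - 2, by omega⟩
    set b := n * (a+2) - (a+2) with hb
    have h1 : (a+2) - 1 = a + 1 := by omega
    have h2 : n * (a+2) - 1 = a + 1 + b := by omega
    have hkey := key a b q
    have hLHS : ∑ k1 ∈ Finset.range (a+2), ∑ k2 ∈ Finset.Icc 1 (n * (a+2) - (a+2)),
        (((a+2) - 1).choose k1 : ℝ) * ((n * (a+2) - (a+2)).choose k2 : ℝ) *
          q ^ (k1 + k2) * (1 - q) ^ (n * (a+2) - 1 - k1 - k2) *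
          ((k1 : ℝ) / ((k1 : ℝ) + (k2 : ℝ)))
        = ∑ k1 ∈ Finset.range (a+2), ∑ k2 ∈ Finset.Icc 1 b,
        (((a+1).choose k1 : ℝ) * (b.choose k2 : ℝ) * q ^ (k1+k2)
          * (1-q) ^ (a+1+b-k1-k2) * ((k1:ℝ)/((k1:ℝ)+(k2:ℝ)))) := by
      rw [h1, ← hb, ← h2]
    rw [hLHS, hkey]
    have hc1 : ((a+2:ℕ):ℝ) - 1 = (a:ℝ) + 1 := by push_cast; ring
    have hc2 : (n:ℝ) * ((a+2:ℕ):ℝ) - 1 = (a:ℝ) + 1 + (b:ℝ) := by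
      have : ((n * (a+2) - 1 : ℕ):ℝ) = (n:ℝ) * ((a+2:ℕ):ℝ) - 1 := by
        push_cast [Nat.cast_sub (by omega : 1 ≤ n * (a+2))]
        ring
      rw [← this, h2]
      push_cast; ring
    have hc3 : ((a+2:ℕ):ℝ) * ((n:ℝ) - 1) = (b:ℝ) := by
      have : ((b:ℕ):ℝ) = (n:ℝ) * ((a+2:ℕ):ℝ) - ((a+2:ℕ):ℝ) := by
        rw [hb]
        push_cast [Nat.cast_sub hnm]
        ring
      rw [this]; push_cast; ring
    rw [hc1, hc2, hc3, h2]
end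

section
/- Let F be an absolutely continuous cdf on [v̲, v̄] ⊂ [0,∞), n ≥ 2, m > 1, and v* ∈ [v̲, v̄). Define B_ND = m²n(n-1)∫∫_{t1 ≥ t2 ≥ v*} t2·F(t2)^{nm-2}·F(t1)^{m-1} dF(t1) dF(t2) and B_WD = m²n(n-1)∫∫_{t1 ≥ t2 ≥ v*} t2·F(t2)^{nm-m-1}·F(t1)^{m-1} dF(t1) dF(t2). Then B_WD ≥ B_ND, and B_WD > B_ND provided the integrand region where t2 > 0 and 0 < F(t2) < 1 has positive measure. -/
open MeasureTheory

theorem stmt8 (n m : ℕ) (hn : 2 ≤ n) (hm : 1 < m)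
    (vlo vhi vstar : ℝ) (h0 : 0 ≤ vlo) (hv : vstar ∈ Set.Ico vlo vhi)
    (F f : ℝ → ℝ)
    (hFmono : MonotoneOn F (Set.Icc vlo vhi))
    (hF0 : ∀ t ∈ Set.Icc vlo vhi, 0 ≤ F t) (hF1 : ∀ t ∈ Set.Icc vlo vhi, F t ≤ 1)
    (hf0 : ∀ t, 0 ≤ f t)
    (hIntND : IntegrableOn
      (fun p : ℝ × ℝ => p.2 * F p.2 ^ (n * m - 2) * F p.1 ^ (m - 1) * f p.1 * f p.2)
      {p : ℝ × ℝ | vstar ≤ p.2 ∧ p.2 ≤ p.1 ∧ p.1 ≤ vhi} volume)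
    (hIntWD : IntegrableOn
      (fun p : ℝ × ℝ => p.2 * F p.2 ^ (n * m - m - 1) * F p.1 ^ (m - 1) * f p.1 * f p.2)
      {p : ℝ × ℝ | vstar ≤ p.2 ∧ p.2 ≤ p.1 ∧ p.1 ≤ vhi} volume) :
    (m : ℝ) ^ 2 * (n : ℝ) * ((n : ℝ) - 1) *
        (∫ p in {p : ℝ × ℝ | vstar ≤ p.2 ∧ p.2 ≤ p.1 ∧ p.1 ≤ vhi},
          p.2 * F p.2 ^ (n * m - 2) * F p.1 ^ (m - 1) * f p.1 * f p.2) ≤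
      (m : ℝ) ^ 2 * (n : ℝ) * ((n : ℝ) - 1) *
        (∫ p in {p : ℝ × ℝ | vstar ≤ p.2 ∧ p.2 ≤ p.1 ∧ p.1 ≤ vhi},
          p.2 * F p.2 ^ (n * m - m - 1) * F p.1 ^ (m - 1) * f p.1 * f p.2) ∧
    (0 < volume {p : ℝ × ℝ | (vstar ≤ p.2 ∧ p.2 ≤ p.1 ∧ p.1 ≤ vhi) ∧
        0 < p.2 ∧ 0 < F p.2 ∧ F p.2 < 1 ∧ 0 < f p.1 ∧ 0 < f p.2} →
      (m : ℝ) ^ 2 * (n : ℝ) * ((n : ℝ) - 1) *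
        (∫ p in {p : ℝ × ℝ | vstar ≤ p.2 ∧ p.2 ≤ p.1 ∧ p.1 ≤ vhi},
          p.2 * F p.2 ^ (n * m - 2) * F p.1 ^ (m - 1) * f p.1 * f p.2) <
      (m : ℝ) ^ 2 * (n : ℝ) * ((n : ℝ) - 1) *
        (∫ p in {p : ℝ × ℝ | vstar ≤ p.2 ∧ p.2 ≤ p.1 ∧ p.1 ≤ vhi},
          p.2 * F p.2 ^ (n * m - m - 1) * F p.1 ^ (m - 1) * f p.1 * f p.2)) := by

  classical
  set S : Set (ℝ × ℝ) := {p : ℝ × ℝ | vstar ≤ p.2 ∧ p.2 ≤ p.1 ∧ p.1 ≤ vhi} with hS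
  have hSmeas : MeasurableSet S := by
    have : S = {p : ℝ × ℝ | vstar ≤ p.2} ∩ ({p | p.2 ≤ p.1} ∩ {p | p.1 ≤ vhi}) := by
      ext p; simp [hS, Set.mem_setOf_eq, and_assoc]
    rw [this]
    exact ((isClosed_le continuous_const continuous_snd).measurableSet).inter
      (((isClosed_le continuous_snd continuous_fst).measurableSet).inter
        ((isClosed_le continuous_fst continuous_const).measurableSet))
  have hexp : n * m - m - 1 ≤ n * m - 2 := by
    have : 2 ≤ m + 1 := by omega
    omega
  -- membership facts
  have hmemS : ∀ p ∈ S, p.1 ∈ Set.Icc vlo vhi ∧ p.2 ∈ Set.Icc vlo vhi := by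
    intro p hp
    obtain ⟨h1, h2, h3⟩ := hp
    have hvlo : vlo ≤ vstar := hv.1
    constructor
    · exact ⟨le_trans hvlo (le_trans h1 h2), h3⟩
    · exact ⟨le_trans hvlo h1, le_trans h2 h3⟩
  have hle : ∀ p ∈ S,
      p.2 * F p.2 ^ (n * m - 2) * F p.1 ^ (m - 1) * f p.1 * f p.2 ≤
      p.2 * F p.2 ^ (n * m - m - 1) * F p.1 ^ (m - 1) * f p.1 * f p.2 := by
    intro p hp
    obtain ⟨hp1, hp2⟩ := hmemS p hp
    have h2nn : 0 ≤ p.2 := le_trans h0 hp2.1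
    have hF2 : 0 ≤ F p.2 := hF0 _ hp2
    have hF2' : F p.2 ≤ 1 := hF1 _ hp2
    have hF1nn : 0 ≤ F p.1 := hF0 _ hp1
    have hpow : F p.2 ^ (n * m - 2) ≤ F p.2 ^ (n * m - m - 1) :=
      pow_le_pow_of_le_one hF2 hF2' hexp
    have := mul_le_mul_of_nonneg_left hpow h2nn
    have h1 := mul_le_mul_of_nonneg_right this (pow_nonneg hF1nn (m - 1))
    have h2 := mul_le_mul_of_nonneg_right h1 (hf0 p.1)
    exact mul_le_mul_of_nonneg_right h2 (hf0 p.2)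
  have hIle : (∫ p in S, p.2 * F p.2 ^ (n * m - 2) * F p.1 ^ (m - 1) * f p.1 * f p.2) ≤
      (∫ p in S, p.2 * F p.2 ^ (n * m - m - 1) * F p.1 ^ (m - 1) * f p.1 * f p.2) :=
    setIntegral_mono_on hIntND hIntWD hSmeas hle
  have hcpos : (0 : ℝ) < (m : ℝ) ^ 2 * (n : ℝ) * ((n : ℝ) - 1) := by
    have hm' : (1 : ℝ) < (m : ℝ) := by exact_mod_cast hm
    have hn' : (2 : ℝ) ≤ (n : ℝ) := by exact_mod_cast hn
    have h1 : (0 : ℝ) < (m : ℝ) ^ 2 := by positivity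
    have h2 : (0 : ℝ) < (n : ℝ) := by linarith
    have h3 : (0 : ℝ) < (n : ℝ) - 1 := by linarith
    exact mul_pos (mul_pos h1 h2) h3
  refine ⟨mul_le_mul_of_nonneg_left hIle hcpos.le, ?_⟩
  intro hT
  set D : ℝ × ℝ → ℝ := fun p =>
    p.2 * F p.2 ^ (n * m - m - 1) * F p.1 ^ (m - 1) * f p.1 * f p.2 -
    p.2 * F p.2 ^ (n * m - 2) * F p.1 ^ (m - 1) * f p.1 * f p.2 with hD
  have hDint : IntegrableOn D S volume := hIntWD.sub hIntND
  have hDnn : 0 ≤ᵐ[volume.restrict S] D := by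
    filter_upwards [ae_restrict_mem hSmeas] with p hp
    exact sub_nonneg.mpr (hle p hp)
  have hTsub : {p : ℝ × ℝ | (vstar ≤ p.2 ∧ p.2 ≤ p.1 ∧ p.1 ≤ vhi) ∧
      0 < p.2 ∧ 0 < F p.2 ∧ F p.2 < 1 ∧ 0 < f p.1 ∧ 0 < f p.2} ⊆ Function.support D ∩ S := by
    rintro p ⟨hpS, hp2, hF2pos, hF2lt, hfp1, hfp2⟩
    refine ⟨?_, hpS⟩
    obtain ⟨hp1m, hp2m⟩ := hmemS p hpS
    have hFmle : F p.2 ≤ F p.1 := hFmono hp2m hp1m hpS.2.1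
    have hF1pos : 0 < F p.1 := lt_of_lt_of_le hF2pos hFmle
    have hexplt : n * m - 2 < n * m - m - 1 → False := by omega
    have hstrict : n * m - m - 1 < n * m - 2 := by
      have h1 : m + 1 ≤ n * m := by nlinarith
      omega
    have hpow : F p.2 ^ (n * m - 2) < F p.2 ^ (n * m - m - 1) :=
      pow_lt_pow_right_of_lt_one₀ hF2pos hF2lt hstrict
    have hDpos : 0 < D p := by
      have : p.2 * F p.2 ^ (n * m - 2) < p.2 * F p.2 ^ (n * m - m - 1) :=
        (mul_lt_mul_iff_right₀ hp2).mpr hpow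
      have h1 : p.2 * F p.2 ^ (n * m - 2) * F p.1 ^ (m - 1) <
          p.2 * F p.2 ^ (n * m - m - 1) * F p.1 ^ (m - 1) :=
        (mul_lt_mul_iff_left₀ (pow_pos hF1pos (m - 1))).mpr this
      have h2 := (mul_lt_mul_iff_left₀ hfp1).mpr h1
      have h3 := (mul_lt_mul_iff_left₀ hfp2).mpr h2
      simpa [hD] using sub_pos.mpr h3
    exact ne_of_gt hDpos
  have hsupp : 0 < volume (Function.support D ∩ S) :=
    lt_of_lt_of_le hT (measure_mono hTsub)
  have hIpos : 0 < ∫ p in S, D p :=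
    (setIntegral_pos_iff_support_of_nonneg_ae hDnn hDint).mpr hsupp
  have hsub : (∫ p in S, D p) =
      (∫ p in S, p.2 * F p.2 ^ (n * m - m - 1) * F p.1 ^ (m - 1) * f p.1 * f p.2) -
      (∫ p in S, p.2 * F p.2 ^ (n * m - 2) * F p.1 ^ (m - 1) * f p.1 * f p.2) :=
    integral_sub hIntWD hIntND
  have hlt : (∫ p in S, p.2 * F p.2 ^ (n * m - 2) * F p.1 ^ (m - 1) * f p.1 * f p.2) <
      (∫ p in S, p.2 * F p.2 ^ (n * m - m - 1) * F p.1 ^ (m - 1) * f p.1 * f p.2) := by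
    rw [hsub] at hIpos; linarith
  exact mul_lt_mul_of_pos_left hlt hcpos
end

section
/- Let F be an absolutely continuous cdf on [v̲, v̄] ⊂ [0,∞), n ≥ 2, m > 1, and v* ∈ [v̲, v̄). Define the total-investment benchmark B_ND^tot = m²n(n-1)∫∫_{t1 ≥ t2 ≥ v*} t2·F(t2)^{nm-2} dF(t1) dF(t2) and B_WD = m²n(n-1)∫∫_{t1 ≥ t2 ≥ v*} t2·F(t2)^{nm-m-1}·F(t1)^{m-1} dF(t1) dF(t2). Then B_WD ≥ B_ND^tot. -/
open MeasureTheory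

theorem stmt9 (n m : ℕ) (hn : 2 ≤ n) (hm : 1 < m)
    (vlo vhi vstar : ℝ) (h0 : 0 ≤ vlo) (hv : vstar ∈ Set.Ico vlo vhi)
    (F f : ℝ → ℝ)
    (hFmono : MonotoneOn F (Set.Icc vlo vhi))
    (hF0 : ∀ t ∈ Set.Icc vlo vhi, 0 ≤ F t) (hF1 : ∀ t ∈ Set.Icc vlo vhi, F t ≤ 1)
    (hf0 : ∀ t, 0 ≤ f t)
    (hIntTot : IntegrableOn
      (fun p : ℝ × ℝ => p.2 * F p.2 ^ (n * m - 2) * f p.1 * f p.2)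
      {p : ℝ × ℝ | vstar ≤ p.2 ∧ p.2 ≤ p.1 ∧ p.1 ≤ vhi} volume)
    (hIntWD : IntegrableOn
      (fun p : ℝ × ℝ => p.2 * F p.2 ^ (n * m - m - 1) * F p.1 ^ (m - 1) * f p.1 * f p.2)
      {p : ℝ × ℝ | vstar ≤ p.2 ∧ p.2 ≤ p.1 ∧ p.1 ≤ vhi} volume) :
    (m : ℝ) ^ 2 * (n : ℝ) * ((n : ℝ) - 1) *
        (∫ p in {p : ℝ × ℝ | vstar ≤ p.2 ∧ p.2 ≤ p.1 ∧ p.1 ≤ vhi},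
          p.2 * F p.2 ^ (n * m - 2) * f p.1 * f p.2) ≤
      (m : ℝ) ^ 2 * (n : ℝ) * ((n : ℝ) - 1) *
        (∫ p in {p : ℝ × ℝ | vstar ≤ p.2 ∧ p.2 ≤ p.1 ∧ p.1 ≤ vhi},
          p.2 * F p.2 ^ (n * m - m - 1) * F p.1 ^ (m - 1) * f p.1 * f p.2) := by
  have hmul : 2 * m ≤ n * m := Nat.mul_le_mul_right m hn
  have hexp : (n * m - m - 1) + (m - 1) = n * m - 2 := by omega
  have hsmeas : MeasurableSet {p : ℝ × ℝ | vstar ≤ p.2 ∧ p.2 ≤ p.1 ∧ p.1 ≤ vhi} := by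
    apply MeasurableSet.inter
    · exact measurableSet_le measurable_const measurable_snd
    · exact (measurableSet_le measurable_snd measurable_fst).inter
        (measurableSet_le measurable_fst measurable_const)
  have key : (∫ p in {p : ℝ × ℝ | vstar ≤ p.2 ∧ p.2 ≤ p.1 ∧ p.1 ≤ vhi},
          p.2 * F p.2 ^ (n * m - 2) * f p.1 * f p.2) ≤
      (∫ p in {p : ℝ × ℝ | vstar ≤ p.2 ∧ p.2 ≤ p.1 ∧ p.1 ≤ vhi},
          p.2 * F p.2 ^ (n * m - m - 1) * F p.1 ^ (m - 1) * f p.1 * f p.2) := by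
    apply setIntegral_mono_on hIntTot hIntWD hsmeas
    intro p hp
    obtain ⟨h1, h2, h3⟩ := hp
    have ht2mem : p.2 ∈ Set.Icc vlo vhi := ⟨le_trans hv.1 h1, le_trans h2 h3⟩
    have ht1mem : p.1 ∈ Set.Icc vlo vhi := ⟨le_trans ht2mem.1 h2, h3⟩
    have hF2 : 0 ≤ F p.2 := hF0 _ ht2mem
    have hF12 : F p.2 ≤ F p.1 := hFmono ht2mem ht1mem h2
    have hp2 : 0 ≤ p.2 := le_trans (le_trans h0 hv.1) h1
    have hpow : F p.2 ^ (n * m - 2) ≤ F p.2 ^ (n * m - m - 1) * F p.1 ^ (m - 1) := by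
      rw [← hexp, pow_add]
      exact mul_le_mul_of_nonneg_left (pow_le_pow_left₀ hF2 hF12 _)
        (pow_nonneg hF2 _)
    calc p.2 * F p.2 ^ (n * m - 2) * f p.1 * f p.2
        ≤ p.2 * (F p.2 ^ (n * m - m - 1) * F p.1 ^ (m - 1)) * f p.1 * f p.2 := by
          apply mul_le_mul_of_nonneg_right _ (hf0 _)
          apply mul_le_mul_of_nonneg_right _ (hf0 _)
          exact mul_le_mul_of_nonneg_left hpow hp2
      _ = p.2 * F p.2 ^ (n * m - m - 1) * F p.1 ^ (m - 1) * f p.1 * f p.2 := by ring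
  apply mul_le_mul_of_nonneg_left key
  have h1n : (1:ℝ) ≤ n := by exact_mod_cast le_trans (by norm_num) hn
  have : (0:ℝ) ≤ (n:ℝ) - 1 := by linarith
  apply mul_nonneg (mul_nonneg (by positivity) (by positivity)) this
end

section
/- Let F be an absolutely continuous cdf with density f on [v̲, v̄] ⊆ [0,∞), n ≥ 2, m ≥ 2, with elasticity t·f(t)/F(t) ≥ 1/(m-1) wherever F(t) > 0. Let v*_FD ≤ v* be points in [v̲, v̄]. Define B_FD = m²n(n-1)∫∫_{t1 ≥ t2 ≥ v*_FD} (t2/2 + t2²/(2t1))·F(t1)^{m-1}·F(t2)^{nm-m-1} dF(t1) dF(t2) and B_ND = m²n(n-1)∫∫_{t1 ≥ t2 ≥ v*} t2·F(t2)^{nm-2}·F(t1)^{m-1} dF(t1) dF(t2). Then B_FD ≥ B_ND. -/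
open MeasureTheory

lemma gron_aux (m : ℕ) (hm : 2 ≤ m) (vlo vhi a b : ℝ) (F f : ℝ → ℝ)
    (hf0 : ∀ t, 0 ≤ f t)
    (hfi : IntegrableOn f (Set.Icc vlo vhi))
    (hFmono : MonotoneOn F (Set.Icc vlo vhi))
    (hFrep : ∀ t ∈ Set.Icc vlo vhi, F t = ∫ s in vlo..t, f s)
    (hxi : ∀ t ∈ Set.Icc vlo vhi, 0 < F t → 1 / ((m : ℝ) - 1) ≤ t * f t / F t)
    (hvloa : vlo ≤ a) (ha : 0 < a) (hab : a ≤ b) (hb : b ≤ vhi) (hFa : 0 < F a) :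
    F a ^ (m - 1) * b ≤ F b ^ (m - 1) * a := by
  have hm1 : (0:ℝ) < (m:ℝ) - 1 := by
    have : (2:ℝ) ≤ (m:ℝ) := by exact_mod_cast hm
    linarith
  set c : ℝ := 1 / ((m:ℝ) - 1) with hc
  have hcpos : 0 < c := by positivity
  -- K and its properties
  set K : ℝ → ℝ := fun s => c * (Real.log s - Real.log a) with hK
  have hKa : K a = 0 := by simp [hK]
  have hKderiv : ∀ s : ℝ, 0 < s → HasDerivAt K (c / s) s := by
    intro s hs
    have h1 : HasDerivAt (fun s => Real.log s - Real.log a) s⁻¹ s := by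
      simpa using (Real.hasDerivAt_log (ne_of_gt hs)).sub_const (Real.log a)
    simpa [div_eq_mul_inv] using h1.const_mul c
  have hamem : a ∈ Set.Icc vlo vhi := ⟨hvloa, le_trans hab hb⟩
  have hbmem : b ∈ Set.Icc vlo vhi := ⟨le_trans hvloa hab, hb⟩
  have hsub : Set.Icc a b ⊆ Set.Icc vlo vhi := Set.Icc_subset_Icc hvloa hb
  -- continuity of F on [vlo, vhi]
  have hFcont : ContinuousOn F (Set.Icc vlo vhi) := by
    have h1 : ContinuousOn (fun x => ∫ t in vlo..x, f t) (Set.Icc vlo vhi) := by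
      have := intervalIntegral.continuousOn_primitive_interval
        (a := vlo) (b := vhi) (μ := volume) (f := f) ?_
      · refine this.mono ?_
        rw [Set.uIcc_of_le (le_trans hvloa (le_trans hab hb))]
      · rw [Set.uIcc_of_le (le_trans hvloa (le_trans hab hb))]; exact hfi
    exact ContinuousOn.congr h1 hFrep
  -- key integral inequality: F u ≥ F a + ∫_a^u (c/s) F s ds
  have hkeyint : ∀ u ∈ Set.Icc a b,
      F a + ∫ s in a..u, (c / s) * F s ≤ F u := by
    intro u hu
    have humem : u ∈ Set.Icc vlo vhi := hsub hu
    have hiau : IntegrableOn f (Set.Icc a u) :=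
      hfi.mono_set (Set.Icc_subset_Icc hvloa humem.2)
    have hfint : IntervalIntegrable f volume a u := by
      rw [intervalIntegrable_iff_integrableOn_Icc_of_le hu.1]; exact hiau
    have hIvu : IntervalIntegrable f volume vlo u :=
      (intervalIntegrable_iff_integrableOn_Icc_of_le (le_trans hvloa hu.1)).mpr
        (hfi.mono_set (Set.Icc_subset_Icc le_rfl humem.2))
    have hIva : IntervalIntegrable f volume vlo a :=
      (intervalIntegrable_iff_integrableOn_Icc_of_le hvloa).mpr
        (hfi.mono_set (Set.Icc_subset_Icc le_rfl hamem.2))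
    have hFu : F u - F a = ∫ s in a..u, f s := by
      rw [hFrep u humem, hFrep a hamem]
      exact (intervalIntegral.integral_interval_sub_left hIvu hIva)
    have hcFcont : ContinuousOn (fun s => (c / s) * F s) (Set.Icc a u) := by
      apply ContinuousOn.mul
      · exact continuousOn_const.div continuousOn_id (fun s hs => ne_of_gt (lt_of_lt_of_le ha hs.1))
      · exact hFcont.mono (Set.Icc_subset_Icc hvloa humem.2)
    have hcFint : IntervalIntegrable (fun s => (c / s) * F s) volume a u := by
      rw [intervalIntegrable_iff_integrableOn_Icc_of_le hu.1]
      exact hcFcont.integrableOn_Icc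
    have hpt : ∀ s ∈ Set.Icc a u, (c / s) * F s ≤ f s := by
      intro s hs
      have hsmem : s ∈ Set.Icc vlo vhi := ⟨le_trans hvloa hs.1, le_trans hs.2 humem.2⟩
      have hspos : 0 < s := lt_of_lt_of_le ha hs.1
      rcases le_or_gt (F s) 0 with hFs | hFs
      · have : (c / s) * F s ≤ 0 := mul_nonpos_of_nonneg_of_nonpos (by positivity) hFs
        exact le_trans this (hf0 s)
      · have h2 := hxi s hsmem hFs
        rw [le_div_iff₀ hFs] at h2
        rw [div_mul_eq_mul_div, div_le_iff₀ hspos]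
        calc c * F s = 1 / ((m:ℝ)-1) * F s := rfl
          _ ≤ s * f s := h2
          _ = f s * s := by ring
    have hmono : ∫ s in a..u, (c / s) * F s ≤ ∫ s in a..u, f s :=
      intervalIntegral.integral_mono_on hu.1 hcFint hfint hpt
    linarith [hFu ▸ hmono]
  -- F s ≥ F a > 0 on [a,b]
  have hFge : ∀ s ∈ Set.Icc a b, F a ≤ F s := fun s hs =>
    hFmono hamem (hsub hs) hs.1
  -- the iteration
  have hiter : ∀ N : ℕ, ∀ u ∈ Set.Icc a b,
      F a * (∑ j ∈ Finset.range (N + 1), K u ^ j / (Nat.factorial j)) ≤ F u := by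
    intro N
    induction N with
    | zero => intro u hu; simpa using hFge u hu
    | succ N ih =>
      intro u hu
      have hKnn : ∀ s ∈ Set.Icc a b, 0 ≤ K s := by
        intro s hs
        have : Real.log a ≤ Real.log s := Real.log_le_log ha hs.1
        have := sub_nonneg.mpr this
        positivity
      -- the integrand lower bound function
      set G : ℝ → ℝ := fun s => (c / s) * (F a * ∑ j ∈ Finset.range (N + 1), K s ^ j / (Nat.factorial j)) with hG
      have hGcont : ContinuousOn G (Set.Icc a u) := by
        apply ContinuousOn.mul
        · exact continuousOn_const.div continuousOn_id (fun s hs => ne_of_gt (lt_of_lt_of_le ha hs.1))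
        · apply ContinuousOn.mul continuousOn_const
          apply continuousOn_finset_sum
          intro j _
          apply ContinuousOn.div_const
          apply ContinuousOn.pow
          apply ContinuousOn.mul continuousOn_const
          apply ContinuousOn.sub _ continuousOn_const
          exact Real.continuousOn_log.mono (fun s hs => ne_of_gt (lt_of_lt_of_le ha hs.1))
      have hGint : IntervalIntegrable G volume a u := by
        rw [intervalIntegrable_iff_integrableOn_Icc_of_le hu.1]
        exact hGcont.integrableOn_Icc
      have hcFcont : ContinuousOn (fun s => (c / s) * F s) (Set.Icc a u) := by
        apply ContinuousOn.mul
        · exact continuousOn_const.div continuousOn_id (fun s hs => ne_of_gt (lt_of_lt_of_le ha hs.1))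
        · exact hFcont.mono (Set.Icc_subset_Icc hvloa (hsub hu).2)
      have hcFint : IntervalIntegrable (fun s => (c / s) * F s) volume a u := by
        rw [intervalIntegrable_iff_integrableOn_Icc_of_le hu.1]
        exact hcFcont.integrableOn_Icc
      have hGle : ∀ s ∈ Set.Icc a u, G s ≤ (c / s) * F s := by
        intro s hs
        have hsab : s ∈ Set.Icc a b := ⟨hs.1, le_trans hs.2 hu.2⟩
        have hspos : 0 < s := lt_of_lt_of_le ha hs.1
        have := ih s hsab
        have hcs : 0 ≤ c / s := by positivity
        exact mul_le_mul_of_nonneg_left this hcs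
      have hint1 : ∫ s in a..u, G s ≤ ∫ s in a..u, (c / s) * F s :=
        intervalIntegral.integral_mono_on hu.1 hGint hcFint hGle
      -- compute ∫ G
      have hcomp : ∫ s in a..u, G s
          = F a * ∑ j ∈ Finset.range (N + 1), K u ^ (j+1) / (Nat.factorial (j+1)) := by
        have : ∀ j : ℕ, (∫ s in a..u, (c / s) * (K s ^ j / (Nat.factorial j)))
            = K u ^ (j+1) / (Nat.factorial (j+1)) := by
          intro j
          have hderiv : ∀ s ∈ Set.uIcc a u, HasDerivAt
              (fun s => K s ^ (j+1) / (Nat.factorial (j+1)))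
              ((c / s) * (K s ^ j / (Nat.factorial j))) s := by
            intro s hs
            rw [Set.uIcc_of_le hu.1] at hs
            have hspos : 0 < s := lt_of_lt_of_le ha hs.1
            have h1 := ((hKderiv s hspos).fun_pow (j+1)).div_const ((Nat.factorial (j+1) : ℝ))
            refine HasDerivAt.congr_deriv h1 ?_
            simp only [Nat.factorial_succ, Nat.cast_mul, Nat.add_sub_cancel]
            field_simp
          have hcont2 : ContinuousOn (fun s => (c / s) * (K s ^ j / (Nat.factorial j))) (Set.uIcc a u) := by
            rw [Set.uIcc_of_le hu.1]
            apply ContinuousOn.mul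
            · exact continuousOn_const.div continuousOn_id (fun s hs => ne_of_gt (lt_of_lt_of_le ha hs.1))
            · apply ContinuousOn.div_const
              apply ContinuousOn.pow
              apply ContinuousOn.mul continuousOn_const
              apply ContinuousOn.sub _ continuousOn_const
              exact Real.continuousOn_log.mono (fun s hs => ne_of_gt (lt_of_lt_of_le ha hs.1))
          have hint2 : IntervalIntegrable (fun s => (c / s) * (K s ^ j / (Nat.factorial j))) volume a u := by
            rw [intervalIntegrable_iff_integrableOn_Icc_of_le hu.1]
            rw [Set.uIcc_of_le hu.1] at hcont2
            exact hcont2.integrableOn_Icc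
          rw [intervalIntegral.integral_eq_sub_of_hasDerivAt hderiv hint2]
          simp [hKa]
        calc ∫ s in a..u, G s
            = ∫ s in a..u, ∑ j ∈ Finset.range (N+1), F a * ((c / s) * (K s ^ j / (Nat.factorial j))) := by
              apply intervalIntegral.integral_congr
              intro s _
              simp only [hG, Finset.mul_sum]
              exact Finset.sum_congr rfl (fun j _ => by ring)
          _ = ∑ j ∈ Finset.range (N+1), ∫ s in a..u, F a * ((c / s) * (K s ^ j / (Nat.factorial j))) := by
              apply intervalIntegral.integral_finset_sum
              intro j _
              apply IntervalIntegrable.const_mul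
              rw [intervalIntegrable_iff_integrableOn_Icc_of_le hu.1]
              apply ContinuousOn.integrableOn_Icc
              apply ContinuousOn.mul
              · exact continuousOn_const.div continuousOn_id (fun s hs => ne_of_gt (lt_of_lt_of_le ha hs.1))
              · apply ContinuousOn.div_const
                apply ContinuousOn.pow
                apply ContinuousOn.mul continuousOn_const
                apply ContinuousOn.sub _ continuousOn_const
                exact Real.continuousOn_log.mono (fun s hs => ne_of_gt (lt_of_lt_of_le ha hs.1))
          _ = ∑ j ∈ Finset.range (N+1), F a * (K u ^ (j+1) / (Nat.factorial (j+1))) := by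
              apply Finset.sum_congr rfl
              intro j _
              rw [intervalIntegral.integral_const_mul, this j]
          _ = F a * ∑ j ∈ Finset.range (N + 1), K u ^ (j+1) / (Nat.factorial (j+1)) := by
              rw [Finset.mul_sum]
      have hsum : (∑ j ∈ Finset.range (N + 1 + 1), K u ^ j / (Nat.factorial j))
          = 1 + ∑ j ∈ Finset.range (N + 1), K u ^ (j+1) / (Nat.factorial (j+1)) := by
        rw [Finset.sum_range_succ']
        simp [add_comm]
      calc F a * ∑ j ∈ Finset.range (N + 1 + 1), K u ^ j / (Nat.factorial j)
          = F a + F a * ∑ j ∈ Finset.range (N + 1), K u ^ (j+1) / (Nat.factorial (j+1)) := by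
            rw [hsum]; ring
        _ = F a + ∫ s in a..u, G s := by rw [hcomp]
        _ ≤ F a + ∫ s in a..u, (c / s) * F s := by linarith
        _ ≤ F u := hkeyint u hu
  -- pass to the limit
  have hlim : F a * Real.exp (K b) ≤ F b := by
    have hts : HasSum (fun j : ℕ => K b ^ j / (Nat.factorial j)) (Real.exp (K b)) := by
      rw [Real.exp_eq_exp_ℝ]
      exact NormedSpace.expSeries_div_hasSum_exp (K b)
    have htend := hts.tendsto_sum_nat
    have htend2 : Filter.Tendsto (fun N : ℕ => F a * ∑ j ∈ Finset.range (N+1), K b ^ j / (Nat.factorial j))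
        Filter.atTop (nhds (F a * Real.exp (K b))) := by
      apply Filter.Tendsto.const_mul
      exact htend.comp (Filter.tendsto_add_atTop_nat 1)
    apply le_of_tendsto htend2
    filter_upwards with N
    exact hiter N b ⟨hab, le_rfl⟩
  -- rewrite exp(K b) as (b/a)^c
  have hba : 0 < b / a := div_pos (lt_of_lt_of_le ha hab) ha
  have hexp : Real.exp (K b) = (b / a) ^ c := by
    rw [Real.rpow_def_of_pos hba]
    congr 1
    rw [Real.log_div (ne_of_gt (lt_of_lt_of_le ha hab)) (ne_of_gt ha)]
    ring
  have hmain : F a * (b / a) ^ c ≤ F b := by rwa [hexp] at hlim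
  -- raise to the power m-1
  have hnn : 0 ≤ F a * (b / a) ^ c := by positivity
  have hpow := pow_le_pow_left₀ hnn hmain (m - 1)
  rw [mul_pow] at hpow
  have hrw : ((b / a) ^ c) ^ (m - 1) = b / a := by
    rw [← Real.rpow_natCast ((b/a) ^ c) (m-1), ← Real.rpow_mul (le_of_lt hba)]
    have : c * ((m-1 : ℕ) : ℝ) = 1 := by
      have : ((m - 1 : ℕ) : ℝ) = (m:ℝ) - 1 := by
        have : (1:ℕ) ≤ m := le_trans one_le_two hm
        push_cast [Nat.cast_sub this]; ring
      rw [this, hc]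
      field_simp
    rw [this, Real.rpow_one]
  rw [hrw] at hpow
  calc F a ^ (m-1) * b = (F a ^ (m-1) * (b / a)) * a := by field_simp
    _ ≤ F b ^ (m-1) * a := by
        apply mul_le_mul_of_nonneg_right hpow (le_of_lt ha)


theorem stmt13 (n m : ℕ) (hn : 2 ≤ n) (hm : 2 ≤ m)
    (vlo vhi vstar vFDstar : ℝ) (h0 : 0 ≤ vlo)
    (hFDmem : vFDstar ∈ Set.Icc vlo vhi) (hstarmem : vstar ∈ Set.Icc vlo vhi)
    (horder : vFDstar ≤ vstar)
    (F f : ℝ → ℝ) (hfm : Measurable f) (hf0 : ∀ t, 0 ≤ f t)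
    (hfi : IntegrableOn f (Set.Icc vlo vhi))
    (hFmono : MonotoneOn F (Set.Icc vlo vhi))
    (hF0 : ∀ t ∈ Set.Icc vlo vhi, 0 ≤ F t) (hF1 : ∀ t ∈ Set.Icc vlo vhi, F t ≤ 1)
    (hFrep : ∀ t ∈ Set.Icc vlo vhi, F t = ∫ s in vlo..t, f s)
    (hxi : ∀ t ∈ Set.Icc vlo vhi, 0 < F t → 1 / ((m : ℝ) - 1) ≤ t * f t / F t)
    (hIntFD : IntegrableOn
      (fun p : ℝ × ℝ => (p.2 / 2 + p.2 ^ 2 / (2 * p.1)) * F p.1 ^ (m - 1) *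
        F p.2 ^ (n * m - m - 1) * f p.1 * f p.2)
      {p : ℝ × ℝ | vFDstar ≤ p.2 ∧ p.2 ≤ p.1 ∧ p.1 ≤ vhi} volume)
    (hIntND : IntegrableOn
      (fun p : ℝ × ℝ => p.2 * F p.2 ^ (n * m - 2) * F p.1 ^ (m - 1) * f p.1 * f p.2)
      {p : ℝ × ℝ | vstar ≤ p.2 ∧ p.2 ≤ p.1 ∧ p.1 ≤ vhi} volume) :
    (m : ℝ) ^ 2 * (n : ℝ) * ((n : ℝ) - 1) *
        (∫ p in {p : ℝ × ℝ | vstar ≤ p.2 ∧ p.2 ≤ p.1 ∧ p.1 ≤ vhi},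
          p.2 * F p.2 ^ (n * m - 2) * F p.1 ^ (m - 1) * f p.1 * f p.2) ≤
      (m : ℝ) ^ 2 * (n : ℝ) * ((n : ℝ) - 1) *
        (∫ p in {p : ℝ × ℝ | vFDstar ≤ p.2 ∧ p.2 ≤ p.1 ∧ p.1 ≤ vhi},
          (p.2 / 2 + p.2 ^ 2 / (2 * p.1)) * F p.1 ^ (m - 1) *
            F p.2 ^ (n * m - m - 1) * f p.1 * f p.2) := by
  set S : Set (ℝ × ℝ) := {p : ℝ × ℝ | vstar ≤ p.2 ∧ p.2 ≤ p.1 ∧ p.1 ≤ vhi} with hS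
  set S' : Set (ℝ × ℝ) := {p : ℝ × ℝ | vFDstar ≤ p.2 ∧ p.2 ≤ p.1 ∧ p.1 ≤ vhi} with hS'
  set gFD : ℝ × ℝ → ℝ := fun p => (p.2 / 2 + p.2 ^ 2 / (2 * p.1)) * F p.1 ^ (m - 1) *
    F p.2 ^ (n * m - m - 1) * f p.1 * f p.2 with hgFD
  set gND : ℝ × ℝ → ℝ := fun p => p.2 * F p.2 ^ (n * m - 2) * F p.1 ^ (m - 1) * f p.1 * f p.2
    with hgND
  have hsub : S ⊆ S' := by
    intro p hp
    exact ⟨le_trans horder hp.1, hp.2.1, hp.2.2⟩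
  have hSm : MeasurableSet S := by
    have : S = (fun p : ℝ × ℝ => p.2) ⁻¹' (Set.Ici vstar) ∩
        ({p : ℝ × ℝ | p.2 ≤ p.1} ∩ (fun p : ℝ × ℝ => p.1) ⁻¹' (Set.Iic vhi)) := rfl
    rw [this]
    exact (measurable_snd measurableSet_Ici).inter
      ((measurableSet_le measurable_snd measurable_fst).inter
        (measurable_fst measurableSet_Iic))
  have hS'm : MeasurableSet S' := by
    have : S' = (fun p : ℝ × ℝ => p.2) ⁻¹' (Set.Ici vFDstar) ∩
        ({p : ℝ × ℝ | p.2 ≤ p.1} ∩ (fun p : ℝ × ℝ => p.1) ⁻¹' (Set.Iic vhi)) := rfl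
    rw [this]
    exact (measurable_snd measurableSet_Ici).inter
      ((measurableSet_le measurable_snd measurable_fst).inter
        (measurable_fst measurableSet_Iic))
  -- nonnegativity of gFD on S'
  have hgFDnn : ∀ p ∈ S', 0 ≤ gFD p := by
    intro p hp
    obtain ⟨h1, h2, h3⟩ := hp
    have ht2 : 0 ≤ p.2 := le_trans h0 (le_trans hFDmem.1 h1)
    have ht1 : 0 ≤ p.1 := le_trans ht2 h2
    have h2mem : p.2 ∈ Set.Icc vlo vhi :=
      ⟨le_trans hFDmem.1 h1, le_trans h2 h3⟩
    have h1mem : p.1 ∈ Set.Icc vlo vhi := ⟨le_trans h2mem.1 h2, h3⟩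
    have hw : 0 ≤ p.2 / 2 + p.2 ^ 2 / (2 * p.1) := by
      have : 0 ≤ p.2 ^ 2 / (2 * p.1) := div_nonneg (sq_nonneg _) (by linarith)
      linarith
    exact mul_nonneg (mul_nonneg (mul_nonneg (mul_nonneg hw
      (pow_nonneg (hF0 _ h1mem) _)) (pow_nonneg (hF0 _ h2mem) _)) (hf0 _)) (hf0 _)
  -- pointwise comparison on S
  have hnm : m + 2 ≤ n * m := by
    calc m + 2 ≤ m + m := by omega
      _ = 2 * m := by ring
      _ ≤ n * m := Nat.mul_le_mul_right m hn
  have hpt : ∀ p ∈ S, gND p ≤ gFD p := by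
    intro p hp
    obtain ⟨h1, h2, h3⟩ := hp
    have ht2 : 0 ≤ p.2 := le_trans h0 (le_trans hstarmem.1 h1)
    have h2mem : p.2 ∈ Set.Icc vlo vhi :=
      ⟨le_trans hstarmem.1 h1, le_trans h2 h3⟩
    have h1mem : p.1 ∈ Set.Icc vlo vhi := ⟨le_trans h2mem.1 h2, h3⟩
    have hp' : p ∈ S' := hsub ⟨h1, h2, h3⟩
    rcases eq_or_lt_of_le ht2 with ht20 | ht2pos
    · -- p.2 = 0 : both sides vanish
      simp only [hgND, hgFD, ← ht20]
      norm_num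
    · have ht1pos : 0 < p.1 := lt_of_lt_of_le ht2pos h2
      rcases eq_or_lt_of_le (hF0 _ h2mem) with hF20 | hF2pos
      · -- F p.2 = 0
        have : gND p = 0 := by
          simp only [hgND, ← hF20]
          rw [zero_pow (by omega)]
          ring
        rw [this]
        exact hgFDnn p hp'
      · -- main case : use the Gronwall lemma
        have key := gron_aux m hm vlo vhi p.2 p.1 F f hf0 hfi hFmono hFrep hxi
          h2mem.1 ht2pos h2 h3 hF2pos
        set A := F p.2 ^ (m - 1) with hA
        set B := F p.1 ^ (m - 1) with hB
        set E := F p.2 ^ (n * m - m - 1) with hE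
        set w := p.2 / 2 + p.2 ^ 2 / (2 * p.1) with hw
        have hA0 : 0 ≤ A := pow_nonneg (hF0 _ h2mem) _
        have hB0 : 0 ≤ B := pow_nonneg (hF0 _ h1mem) _
        have hB1 : B ≤ 1 := pow_le_one₀ (hF0 _ h1mem) (hF1 _ h1mem)
        have hq : p.2 ^ 2 / p.1 ≤ p.2 := by
          rw [div_le_iff₀ ht1pos]
          nlinarith
        have hqw : p.2 ^ 2 / p.1 ≤ w := by
          have : p.2 ^ 2 / (2 * p.1) = (p.2 ^ 2 / p.1) / 2 := by
            rw [div_div, mul_comm]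
          rw [hw, this]
          linarith
        have hstep1 : p.2 * A ≤ p.2 ^ 2 / p.1 * B := by
          rw [div_mul_eq_mul_div, le_div_iff₀ ht1pos]
          nlinarith [mul_le_mul_of_nonneg_left key (le_of_lt ht2pos)]
        have hmain : p.2 * A * B ≤ w * B := by
          calc p.2 * A * B ≤ p.2 * A * 1 :=
                mul_le_mul_of_nonneg_left hB1 (mul_nonneg ht2 hA0)
            _ = p.2 * A := by ring
            _ ≤ p.2 ^ 2 / p.1 * B := hstep1
            _ ≤ w * B := mul_le_mul_of_nonneg_right hqw hB0
        have hfac : 0 ≤ E * f p.1 * f p.2 :=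
          mul_nonneg (mul_nonneg (pow_nonneg (hF0 _ h2mem) _) (hf0 _)) (hf0 _)
        have hsplit : F p.2 ^ (n * m - 2) = A * E := by
          rw [hA, hE, ← pow_add]
          congr 1
          omega
        calc gND p = (p.2 * A * B) * (E * f p.1 * f p.2) := by
              simp only [hgND, hsplit]; ring
          _ ≤ (w * B) * (E * f p.1 * f p.2) := mul_le_mul_of_nonneg_right hmain hfac
          _ = gFD p := by simp only [hgFD]; ring
  -- put everything together
  have hconst : 0 ≤ (m : ℝ) ^ 2 * (n : ℝ) * ((n : ℝ) - 1) := by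
    have h1 : (2:ℝ) ≤ (n:ℝ) := by exact_mod_cast hn
    have h2 : (0:ℝ) ≤ (n:ℝ) := by positivity
    have h3 : (0:ℝ) ≤ ((m:ℝ))^2 := sq_nonneg _
    apply mul_nonneg (mul_nonneg h3 h2) (by linarith)
  apply mul_le_mul_of_nonneg_left _ hconst
  calc ∫ p in S, gND p ≤ ∫ p in S, gFD p :=
        setIntegral_mono_on hIntND (hIntFD.mono_set hsub) hSm hpt
    _ ≤ ∫ p in S', gFD p := by
        apply setIntegral_mono_set hIntFD
        · filter_upwards [ae_restrict_mem hS'm] with p hp using hgFDnn p hp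
        · exact Filter.Eventually.of_forall hsub
end
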